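/- arXiv:2512.23149 — 2 statements merged into one kernel-verified Lean document; each statement's English description precedes it below -/
import Mathlib

section
/- Let G_n = n^{−1} e_1 𝟙_n^⊤ ∈ Δ^{n×n} be the normalized directed star on n vertices with all edges pointing away from vertex 1 (so (G_n)_{1,j} = 1/n for all j and all other entries 0). For every fixed k ∈ ℕ, the laws of the random quotients ρ(F_{k,n})G_n converge weakly, as n → ∞, to the law of the random matrix k^{−1} e_I 𝟙_k^⊤, where I is uniformly distributed on [k] and e_i denotes the i-th standard basis vector. In particular, the sequence (G_n) quotient-converges. -/
open MeasureTheory Filter Topology BoundedContinuousFunction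
open scoped ENNReal NNReal

noncomputable section

/-- `G ∈ Δ^{n×n}`: nonnegative entries summing to one. -/
def IsWeightedGraph {n : ℕ} (G : Fin n → Fin n → ℝ) : Prop :=
  (∀ i j, 0 ≤ G i j) ∧ (∑ i, ∑ j, G i j) = 1

/-- The quotient `ρ(f)G`. -/
def quotGraph {n k : ℕ} (f : Fin n → Fin k) (G : Fin n → Fin n → ℝ) :
    Fin k → Fin k → ℝ :=
  fun i j => ∑ u, ∑ v, if f u = i ∧ f v = j then G u v else 0

/-- The law of the random quotient `ρ(F_{k,n})G`. -/
noncomputable def quotientLaw {n : ℕ} (G : Fin n → Fin n → ℝ) (k : ℕ) :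
    Measure (Fin k → Fin k → ℝ) :=
  ((k : ℝ≥0∞) ^ n)⁻¹ • ∑ f : Fin n → Fin k, Measure.dirac (quotGraph f G)

/-- Quotient convergence of a sequence of graphs of sizes `N m`. -/
def QuotientConverges {N : ℕ → ℕ} (G : ∀ m : ℕ, Fin (N m) → Fin (N m) → ℝ) : Prop :=
  ∀ k : ℕ, 1 ≤ k → ∃ ν : Measure (Fin k → Fin k → ℝ), IsProbabilityMeasure ν ∧
    ∀ f : (Fin k → Fin k → ℝ) →ᵇ ℝ,
      Tendsto (fun m => ∫ x, f x ∂(quotientLaw (G m) k)) atTop (𝓝 (∫ x, f x ∂ν))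

def homNum {k n : ℕ} (H : Fin k → Fin k → ℕ) (G : Fin n → Fin n → ℝ) : ℝ :=
  ∑ f : Fin k → Fin n, ∏ i, ∏ j, G (f i) (f j) ^ H i j

def quotDensity {k n : ℕ} (H : Fin k → Fin k → ℕ) (G : Fin n → Fin n → ℝ) : ℝ :=
  ((k : ℝ) ^ n)⁻¹ * ∑ f : Fin n → Fin k, ∏ i, ∏ j, quotGraph f G i j ^ H i j

def IsMultigraph {k : ℕ} (H : Fin k → Fin k → ℕ) : Prop :=
  ∀ i, ∃ j, 0 < H i j ∨ 0 < H j i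

/-!
The quotient of the star by `g : Fin (n + 1) → Fin k` is `e_{g 0} p_gᵀ`, where `p_g` is the
empirical distribution of the labels `g`. Couple it with `e_{g 0} 𝟙ᵀ / k`, whose law under a
uniform `g` is exactly the limit law. Since two distinct vertices get the same label with
probability `1 / k`, the mean square distance between the two matrices is at most
`𝔼 ∑ₐ (p_g a - 1 / k)² = (1 - 1 / k) / (n + 1)`; and a bounded continuous function is uniformly
continuous near the finitely many limit matrices, so the two integrals differ by `o(1)`.
-/

open Finset
open scoped BigOperators

section UniformRandomMap

variable {ι α : Type*} [Fintype ι] [DecidableEq ι] [Fintype α] [Nonempty α]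

lemma expect_comp_eval {M : Type*} [AddCommMonoid M] [Module ℚ≥0 M] (i : ι) (φ : α → M) :
    𝔼 g : ι → α, φ (g i) = 𝔼 a, φ a := by
  rw [Fintype.expect_equiv (Equiv.funSplitAt i α) (fun g => φ (g i)) (fun p => φ p.1)
      (fun _ => rfl), ← univ_product_univ, expect_product]
  simp only [Fintype.expect_const]

lemma expect_ite_apply_eq_apply [DecidableEq α] {u v : ι} (huv : u ≠ v) :
    𝔼 g : ι → α, (if g u = g v then 1 else 0 : ℝ) = (Fintype.card α : ℝ)⁻¹ := by
  rw [Fintype.expect_equiv (Equiv.funSplitAt v α) (fun g => if g u = g v then (1 : ℝ) else 0)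
      (fun p => if p.2 ⟨u, huv⟩ = p.1 then 1 else 0) (fun _ => rfl),
    ← univ_product_univ, expect_product, expect_comm]
  simp

end UniformRandomMap

section EmpiricalFreq

variable {ι α : Type*} [Fintype ι] [Fintype α] [DecidableEq α]

def empiricalFreq (g : ι → α) (a : α) : ℝ := 𝔼 i, if g i = a then 1 else 0

lemma sum_empiricalFreq [Nonempty ι] (g : ι → α) : ∑ a, empiricalFreq g a = 1 := by
  simp only [empiricalFreq, ← expect_sum_comm, sum_ite_eq, mem_univ, if_true,
    Fintype.expect_const]

lemma sum_empiricalFreq_sq (g : ι → α) :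
    ∑ a, empiricalFreq g a ^ 2 = 𝔼 u, 𝔼 v, if g u = g v then 1 else 0 := by
  simp only [empiricalFreq, sq, Fintype.expect_mul_expect]
  rw [← expect_sum_comm]
  refine expect_congr rfl fun u _ => ?_
  rw [← expect_sum_comm]
  refine expect_congr rfl fun v _ => ?_
  simp only [ite_mul, one_mul, zero_mul, sum_ite_eq, mem_univ, if_true]
  exact if_congr eq_comm rfl rfl

lemma sum_sq_empiricalFreq_sub_inv_card [Nonempty ι] [Nonempty α] (g : ι → α) :
    ∑ a, (empiricalFreq g a - (Fintype.card α : ℝ)⁻¹) ^ 2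
      = ∑ a, empiricalFreq g a ^ 2 - (Fintype.card α : ℝ)⁻¹ := by
  have hα : (Fintype.card α : ℝ) ≠ 0 := by positivity
  simp only [sub_sq, sum_add_distrib, sum_sub_distrib, ← sum_mul, ← mul_sum, sum_empiricalFreq,
    sum_const, card_univ, nsmul_eq_mul]
  field_simp
  ring

variable [DecidableEq ι] [Nonempty ι] [Nonempty α]

lemma expect_sum_empiricalFreq_sq :
    𝔼 g : ι → α, ∑ a, empiricalFreq g a ^ 2
      = (Fintype.card α : ℝ)⁻¹ + (1 - (Fintype.card α : ℝ)⁻¹) / Fintype.card ι := by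
  have hpair : ∀ u v : ι, 𝔼 g : ι → α, (if g u = g v then 1 else 0 : ℝ)
      = (Fintype.card α : ℝ)⁻¹ + (1 - (Fintype.card α : ℝ)⁻¹) * if u = v then 1 else 0 := by
    intro u v
    by_cases huv : u = v
    · simp [huv]
    · simp [huv, expect_ite_apply_eq_apply huv]
  simp only [sum_empiricalFreq_sq]
  rw [expect_comm]
  simp only [expect_comm (s := univ (α := ι → α)), hpair]
  simp [expect_add_distrib, NNRat.smul_def, div_eq_mul_inv, mul_comm]

lemma expect_sum_sq_empiricalFreq_sub_inv_card :
    𝔼 g : ι → α, ∑ a, (empiricalFreq g a - (Fintype.card α : ℝ)⁻¹) ^ 2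
      = (1 - (Fintype.card α : ℝ)⁻¹) / Fintype.card ι := by
  simp only [sum_sq_empiricalFreq_sub_inv_card, expect_sub_distrib, expect_sum_empiricalFreq_sq,
    Fintype.expect_const]
  ring

end EmpiricalFreq

section Coupling

variable {X : Type*} [PseudoMetricSpace X]

lemma BoundedContinuousFunction.exists_abs_sub_le_add_mul_dist_sq {K : Set X} (hK : IsCompact K)
    (f : X →ᵇ ℝ) {ε : ℝ} (hε : 0 < ε) :
    ∃ C, ∀ x ∈ K, ∀ y, |f y - f x| ≤ ε + C * dist y x ^ 2 := by
  obtain ⟨δ, hδ, hδK⟩ := Metric.mem_uniformity_dist.mp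
    (hK.uniformContinuousAt_of_continuousAt f (fun x _ => f.continuous.continuousAt)
      (Metric.dist_mem_uniformity hε))
  refine ⟨2 * ‖f‖ / δ ^ 2, fun x hx y => ?_⟩
  rw [abs_sub_comm, ← Real.dist_eq]
  by_cases hxy : dist x y < δ
  · have hfxy : dist (f x) (f y) < ε := hδK hxy hx
    have : 0 ≤ 2 * ‖f‖ / δ ^ 2 * dist y x ^ 2 := by positivity
    linarith
  · have hδxy : δ ^ 2 ≤ dist y x ^ 2 := by
      rw [dist_comm]; gcongr; linarith
    calc dist (f x) (f y) ≤ 2 * ‖f‖ := f.dist_le_two_norm x y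
      _ = 2 * ‖f‖ / δ ^ 2 * δ ^ 2 := by field_simp
      _ ≤ 2 * ‖f‖ / δ ^ 2 * dist y x ^ 2 := by gcongr
      _ ≤ ε + 2 * ‖f‖ / δ ^ 2 * dist y x ^ 2 := by linarith

theorem tendsto_expect_sub_expect_of_tendsto_expect_dist_sq {β : Type*} {l : Filter β}
    {Ω : β → Type*} [∀ b, Fintype (Ω b)] [∀ b, Nonempty (Ω b)] {K : Set X} (hK : IsCompact K)
    {P Q : ∀ b, Ω b → X} (hQ : ∀ b ω, Q b ω ∈ K)
    (hPQ : Tendsto (fun b => 𝔼 ω, dist (P b ω) (Q b ω) ^ 2) l (𝓝 0)) (f : X →ᵇ ℝ) :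
    Tendsto (fun b => 𝔼 ω, f (P b ω) - 𝔼 ω, f (Q b ω)) l (𝓝 0) := by
  rw [Metric.tendsto_nhds]
  intro ε hε
  obtain ⟨C, hC⟩ := f.exists_abs_sub_le_add_mul_dist_sq hK (half_pos hε)
  have hsmall : ∀ᶠ b in l, C * 𝔼 ω, dist (P b ω) (Q b ω) ^ 2 < ε / 2 := by
    have := hPQ.const_mul C
    rw [mul_zero] at this
    exact this.eventually (gt_mem_nhds (half_pos hε))
  filter_upwards [hsmall] with b hb
  rw [Real.dist_eq, sub_zero, ← expect_sub_distrib]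
  calc |𝔼 ω, (f (P b ω) - f (Q b ω))| ≤ 𝔼 ω, |f (P b ω) - f (Q b ω)| := abs_expect_le _ _
    _ ≤ 𝔼 ω, (ε / 2 + C * dist (P b ω) (Q b ω) ^ 2) :=
        expect_le_expect fun ω _ => hC _ (hQ b ω) _
    _ = ε / 2 + C * 𝔼 ω, dist (P b ω) (Q b ω) ^ 2 := by
        rw [expect_add_distrib, Fintype.expect_const, mul_expect]
    _ < ε := by linarith

end Coupling

section UniformDiracs

variable {ι X : Type*} [Fintype ι] [MeasurableSpace X]

lemma isProbabilityMeasure_inv_card_smul_sum_dirac [Nonempty ι] (x : ι → X) :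
    IsProbabilityMeasure ((Fintype.card ι : ℝ≥0∞)⁻¹ • ∑ i, Measure.dirac (x i)) := by
  constructor
  simp [ENNReal.inv_mul_cancel]

lemma integral_inv_card_smul_sum_dirac [TopologicalSpace X] [OpensMeasurableSpace X]
    (x : ι → X) (f : X →ᵇ ℝ) :
    ∫ y, f y ∂((Fintype.card ι : ℝ≥0∞)⁻¹ • ∑ i, Measure.dirac (x i)) = 𝔼 i, f (x i) := by
  rw [integral_smul_measure, integral_finsetSum_measure fun i _ => f.integrable _,
    Fintype.expect_eq_sum_div_card]
  simp [integral_dirac' _ _ f.continuous.stronglyMeasurable, div_eq_inv_mul]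

end UniformDiracs

lemma integral_quotientLaw {n k : ℕ} (G : Fin n → Fin n → ℝ) (f : (Fin k → Fin k → ℝ) →ᵇ ℝ) :
    ∫ x, f x ∂quotientLaw G k = 𝔼 g : Fin n → Fin k, f (quotGraph g G) := by
  have := integral_inv_card_smul_sum_dirac (fun g : Fin n → Fin k => quotGraph g G) f
  rwa [Fintype.card_fun, Fintype.card_fin, Fintype.card_fin, Nat.cast_pow] at this

lemma dist_pi_single_same {ι Y : Type*} [Fintype ι] [DecidableEq ι] [NormedAddCommGroup Y]
    (i : ι) (y z : Y) : dist (Pi.single i y : ι → Y) (Pi.single i z) = dist y z := by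
  rw [dist_eq_norm, ← Pi.single_sub, Pi.norm_single, dist_eq_norm]

lemma dist_sq_le_sum_sq {ι : Type*} [Fintype ι] (p q : ι → ℝ) :
    dist p q ^ 2 ≤ ∑ i, (p i - q i) ^ 2 := by
  have hS : 0 ≤ ∑ i, (p i - q i) ^ 2 := by positivity
  have : dist p q ≤ √(∑ i, (p i - q i) ^ 2) :=
    (dist_pi_le_iff (Real.sqrt_nonneg _)).2 fun i => Real.dist_eq _ _ ▸
      Real.abs_le_sqrt (single_le_sum (f := fun i => (p i - q i) ^ 2)
        (fun i _ => sq_nonneg _) (mem_univ i))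
  calc dist p q ^ 2 ≤ √(∑ i, (p i - q i) ^ 2) ^ 2 := by gcongr
    _ = _ := Real.sq_sqrt hS

section NormalizedOutStar

def normalizedOutStar (n : ℕ) : Fin (n + 1) → Fin (n + 1) → ℝ :=
  fun i _ => if i = 0 then 1 / ((n : ℝ) + 1) else 0

lemma quotGraph_normalizedOutStar {n k : ℕ} (g : Fin (n + 1) → Fin k) :
    quotGraph g (normalizedOutStar n) = Pi.single (g 0) (empiricalFreq g) := by
  ext i j
  rw [quotGraph, Fintype.sum_eq_single 0 fun u hu => by simp [normalizedOutStar, hu]]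
  by_cases hi : i = g 0
  · subst hi
    simp [normalizedOutStar, empiricalFreq, Fintype.expect_eq_sum_div_card, sum_ite,
      div_eq_mul_inv]
  · simp [hi, Ne.symm hi]

variable {k : ℕ} [NeZero k]

lemma expect_dist_quotGraph_normalizedOutStar_sq_le (n : ℕ) :
    𝔼 g : Fin (n + 1) → Fin k,
      dist (quotGraph g (normalizedOutStar n)) (Pi.single (g 0) fun _ => (k : ℝ)⁻¹) ^ 2
        ≤ 1 / ((n : ℝ) + 1) := by
  calc _ ≤ 𝔼 g : Fin (n + 1) → Fin k, ∑ j, (empiricalFreq g j - (k : ℝ)⁻¹) ^ 2 := by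
        refine expect_le_expect fun g _ => ?_
        rw [quotGraph_normalizedOutStar, dist_pi_single_same]
        exact dist_sq_le_sum_sq (empiricalFreq g) fun _ => (k : ℝ)⁻¹
    _ = (1 - (k : ℝ)⁻¹) / ((n : ℝ) + 1) := by
        have := expect_sum_sq_empiricalFreq_sub_inv_card (ι := Fin (n + 1)) (α := Fin k)
        rwa [Fintype.card_fin, Fintype.card_fin, Nat.cast_succ] at this
    _ ≤ 1 / ((n : ℝ) + 1) := by gcongr; simp

theorem tendsto_integral_quotientLaw_normalizedOutStar (f : (Fin k → Fin k → ℝ) →ᵇ ℝ) :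
    Tendsto (fun n => ∫ x, f x ∂quotientLaw (normalizedOutStar n) k) atTop
      (𝓝 (∫ x, f x ∂((k : ℝ≥0∞)⁻¹ •
        ∑ a : Fin k, Measure.dirac (fun i _ : Fin k => if i = a then 1 / (k : ℝ) else 0)))) := by
  set e : Fin k → Fin k → Fin k → ℝ := fun a => Pi.single a fun _ => (k : ℝ)⁻¹ with he
  have hlimit : ∀ a, (fun i _ : Fin k => if i = a then 1 / (k : ℝ) else 0) = e a := fun a => by
    ext i j
    by_cases h : i = a <;> simp [he, h]
  have hcoupling : Tendsto (fun n =>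
      𝔼 g : Fin (n + 1) → Fin k, f (quotGraph g (normalizedOutStar n))
        - 𝔼 g : Fin (n + 1) → Fin k, f (e (g 0))) atTop (𝓝 0) :=
    tendsto_expect_sub_expect_of_tendsto_expect_dist_sq (Ω := fun n => Fin (n + 1) → Fin k)
      (P := fun n g => quotGraph g (normalizedOutStar n)) (Q := fun n g => e (g 0))
      (Set.finite_range e).isCompact (fun n g => Set.mem_range_self (g 0))
      (squeeze_zero (fun n => expect_nonneg fun g _ => by positivity)
        expect_dist_quotGraph_normalizedOutStar_sq_le tendsto_one_div_add_atTop_nhds_zero_nat) f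
  have hint := integral_inv_card_smul_sum_dirac e f
  rw [Fintype.card_fin] at hint
  simp only [hlimit]
  rw [hint, ← tendsto_sub_nhds_zero_iff]
  exact hcoupling.congr fun n => by
    rw [integral_quotientLaw, expect_comp_eval (0 : Fin (n + 1)) fun a => f (e a)]

end NormalizedOutStar

/-- the random quotients of the normalized directed stars (all edges pointing
away from the center) converge weakly to the law of `k⁻¹ e_I 𝟙ᵀ` with `I` uniform on `[k]`;
in particular, the normalized stars quotient-converge. -/
theorem stmt7 (k : ℕ) (hk : 1 ≤ k) :
    (∀ f : (Fin k → Fin k → ℝ) →ᵇ ℝ,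
      Tendsto
        (fun n : ℕ =>
          ∫ x, f x ∂(quotientLaw
            (fun i _ : Fin (n + 1) => if i = 0 then 1 / ((n : ℝ) + 1) else 0) k))
        atTop
        (𝓝 (∫ x, f x ∂((k : ℝ≥0∞)⁻¹ •
          ∑ a : Fin k, Measure.dirac (fun i _ : Fin k => if i = a then 1 / (k : ℝ) else 0))))) ∧
    QuotientConverges (fun n => fun i _ : Fin (n + 1) => if i = 0 then 1 / ((n : ℝ) + 1) else 0) := by
  have : NeZero k := ⟨by omega⟩
  refine ⟨tendsto_integral_quotientLaw_normalizedOutStar, fun k' hk' => ?_⟩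
  have : NeZero k' := ⟨by omega⟩
  refine ⟨_, ?_, tendsto_integral_quotientLaw_normalizedOutStar⟩
  simpa using isProbabilityMeasure_inv_card_smul_sum_dirac
    fun a : Fin k' => fun i _ : Fin k' => if i = a then 1 / (k' : ℝ) else 0
end
end

section
/- Let (G_{i,j})_{i,j∈ℕ} be a nonnegative array with Σ_{i,j∈ℕ} G_{i,j} = 1, suppose s_n = Σ_{i,j∈[n]} G_{i,j} > 0 for every n, and let G_n = s_n^{−1}(G_{i,j})_{i,j∈[n]} ∈ Δ^{n×n} be the normalized truncations. Then the sequence (G_n) quotient-converges, and for every multigraph H ∈ ℕ^{k×k} the series Σ_{f:[k]→ℕ} Π_{i,j∈[k]} G_{f(i),f(j)}^{H_{i,j}} converges to a finite value equal to lim_{n→∞} hom(H;G_n). -/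
open MeasureTheory Filter Topology BoundedContinuousFunction
open scoped ENNReal NNReal

noncomputable section

/-!
Colour the vertices ℕ independently and uniformly with `k` colours. Restricted to the first
`n + 1` vertices the colouring `ω` is a uniform map `[n + 1] → [k]`, so all random quotients
of the truncations `G_n` live on one probability space, as `ρ(ω|_{[n+1]}) G_n`. Since the
truncated masses tend to `1`, these converge for every `ω` to the quotient of the whole array
by `ω`, and dominated convergence gives weak convergence of the laws.

Entries are at most `1`, so a term of the homomorphism series is bounded by the product of `G`
over the edge set of `H`, which covers every vertex. Redundant edges can be dropped; otherwise
some vertex lies on a single edge, and summing it out leaves either a factor at most `1` or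
the row/column sums of `G` as a weight on its neighbour. Induction on the number of vertices
bounds the series by `1`. Finally `hom(H; G_n)` is a partial sum of the series divided by
`s_n ^ |E(H)|`, and `s_n → 1`.
-/

open Finset

section TruncatedSums

variable {α : Type*} [AddCommMonoid α] [TopologicalSpace α]

lemma HasSum.tendsto_sum_range_sum_range {G : ℕ → ℕ → α} {L : α}
    (hG : HasSum (fun p : ℕ × ℕ => G p.1 p.2) L) :
    Tendsto (fun n => ∑ a ∈ range (n + 1), ∑ b ∈ range (n + 1), G a b) atTop (𝓝 L) := by
  have hbox := hG.comp <| tendsto_atTop_finset_of_monotone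
    (fun _ _ h => product_subset_product (range_mono (Nat.succ_le_succ h))
      (range_mono (Nat.succ_le_succ h)))
    fun p => ⟨max p.1 p.2, by simp⟩
  simpa only [Function.comp_def, sum_product] using hbox

lemma HasSum.tendsto_sum_piFinset_range {ι : Type*} [Fintype ι] [DecidableEq ι]
    {F : (ι → ℕ) → α} {L : α} (hF : HasSum F L) :
    Tendsto (fun n => ∑ f ∈ Fintype.piFinset fun _ : ι => range (n + 1), F f) atTop (𝓝 L) :=
  hF.comp <| tendsto_atTop_finset_of_monotone
    (fun _ _ h => Fintype.piFinset_subset _ _ fun _ => range_mono (Nat.succ_le_succ h))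
    fun f => ⟨univ.sup f, Fintype.mem_piFinset.2 fun i =>
      mem_range.2 (Nat.lt_succ_of_le (le_sup (mem_univ i)))⟩

end TruncatedSums

section UniformColoring

variable {k : ℕ}

variable (k) in
def uniformColoring : Measure (ℕ → Fin k) :=
  Measure.infinitePi fun _ => ProbabilityTheory.uniformOn Set.univ

instance [NeZero k] : IsProbabilityMeasure (uniformColoring k) := by
  unfold uniformColoring; infer_instance

lemma uniformColoring_restrict_eq [NeZero k] (n : ℕ) (x : Fin n → Fin k) :
    uniformColoring k {ω | (fun u : Fin n => ω u) = x} = ((k : ℝ≥0∞) ^ n)⁻¹ := by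
  let t : ℕ → Set (Fin k) := fun i => if h : i < n then {x ⟨i, h⟩} else Set.univ
  have hset : {ω : ℕ → Fin k | (fun u : Fin n => ω u) = x} = Set.pi ↑(range n) t := by
    ext ω
    simp only [Set.mem_ofPred_eq, Set.mem_pi, coe_range, Set.mem_Iio, t]
    refine ⟨fun h i hi => by simp [hi, ← h], fun h => funext fun u => ?_⟩
    simpa [u.2] using h u u.2
  have hfactor : ∀ i ∈ range n, ProbabilityTheory.uniformOn Set.univ (t i) = (k : ℝ≥0∞)⁻¹ := by
    intro i hi
    simp [t, mem_range.mp hi, ProbabilityTheory.uniformOn_univ]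
  rw [hset, uniformColoring, Measure.infinitePi_pi _ fun _ _ => .of_discrete,
    prod_congr rfl hfactor]
  simp [ENNReal.inv_pow]

lemma integral_uniformColoring_restrict [NeZero k] (n : ℕ) (F : (Fin n → Fin k) → ℝ) :
    ∫ ω, F (fun u => ω u) ∂uniformColoring k = ((k : ℝ) ^ n)⁻¹ * ∑ x, F x := by
  have hmeas : Measurable fun (ω : ℕ → Fin k) (u : Fin n) => ω u :=
    measurable_pi_lambda _ fun u => measurable_pi_apply _
  rw [← integral_map hmeas.aemeasurable (Measurable.of_discrete).aestronglyMeasurable,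
    integral_fintype .of_finite, mul_sum]
  refine sum_congr rfl fun x _ => ?_
  rw [measureReal_def, Measure.map_apply hmeas (.of_discrete), Set.preimage]
  simp only [Set.mem_singleton_iff]
  rw [uniformColoring_restrict_eq]
  simp [ENNReal.toReal_inv]

end UniformColoring

section QuotientConvergence

variable {k : ℕ}

def normTrunc (G : ℕ → ℕ → ℝ) (n : ℕ) : Fin (n + 1) → Fin (n + 1) → ℝ :=
  fun i j => G i j / ∑ a ∈ range (n + 1), ∑ b ∈ range (n + 1), G a b

lemma integral_quotientLaw_s8 {n : ℕ} (G : Fin n → Fin n → ℝ) (F : (Fin k → Fin k → ℝ) →ᵇ ℝ) :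
    ∫ x, F x ∂quotientLaw G k = ((k : ℝ) ^ n)⁻¹ * ∑ φ : Fin n → Fin k, F (quotGraph φ G) := by
  rw [quotientLaw, integral_smul_measure, integral_finsetSum_measure fun _ _ => F.integrable _]
  simp [integral_dirac, ENNReal.toReal_inv]

def quotLimit (G : ℕ → ℕ → ℝ) (ω : ℕ → Fin k) : Fin k → Fin k → ℝ :=
  fun i j => ∑' p : ℕ × ℕ, if ω p.1 = i ∧ ω p.2 = j then G p.1 p.2 else 0

lemma quotGraph_normTrunc (G : ℕ → ℕ → ℝ) (n : ℕ) (ω : ℕ → Fin k) (i j : Fin k) :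
    quotGraph (fun u : Fin (n + 1) => ω u) (normTrunc G n) i j =
      (∑ a ∈ range (n + 1), ∑ b ∈ range (n + 1), if ω a = i ∧ ω b = j then G a b else 0) /
        ∑ a ∈ range (n + 1), ∑ b ∈ range (n + 1), G a b := by
  simp only [quotGraph, normTrunc, sum_div, ite_div, zero_div, sum_range]

lemma tendsto_quotGraph_normTrunc {G : ℕ → ℕ → ℝ} (hpos : ∀ i j, 0 ≤ G i j)
    (hsum : HasSum (fun p : ℕ × ℕ => G p.1 p.2) 1) (ω : ℕ → Fin k) :
    Tendsto (fun n => quotGraph (fun u : Fin (n + 1) => ω u) (normTrunc G n)) atTop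
      (𝓝 (quotLimit G ω)) := by
  refine tendsto_pi_nhds.2 fun i => tendsto_pi_nhds.2 fun j => ?_
  have hsub : Summable fun p : ℕ × ℕ => if ω p.1 = i ∧ ω p.2 = j then G p.1 p.2 else 0 :=
    hsum.summable.of_nonneg_of_le (fun p => by split_ifs <;> simp [hpos])
      fun p => by split_ifs <;> simp [hpos]
  have hlim := (HasSum.tendsto_sum_range_sum_range (G := fun a b =>
    if ω a = i ∧ ω b = j then G a b else 0) hsub.hasSum).div hsum.tendsto_sum_range_sum_range
    one_ne_zero
  rw [div_one] at hlim
  exact hlim.congr fun n => (quotGraph_normTrunc G n ω i j).symm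

theorem quotientConverges_normTrunc {G : ℕ → ℕ → ℝ} (hpos : ∀ i j, 0 ≤ G i j)
    (hsum : HasSum (fun p : ℕ × ℕ => G p.1 p.2) 1) : QuotientConverges (normTrunc G) := by
  intro k hk
  have : NeZero k := ⟨by omega⟩
  have hX : ∀ n, Measurable fun ω : ℕ → Fin k =>
      quotGraph (fun u : Fin (n + 1) => ω u) (normTrunc G n) := fun n =>
    (Measurable.of_discrete (f := fun φ : Fin (n + 1) → Fin k => quotGraph φ (normTrunc G n))).comp
      (measurable_pi_lambda _ fun u => measurable_pi_apply _)
  have hlim := tendsto_quotGraph_normTrunc (k := k) hpos hsum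
  have hQ : Measurable (quotLimit G) := measurable_of_tendsto_metrizable hX (tendsto_pi_nhds.2 hlim)
  refine ⟨(uniformColoring k).map (quotLimit G), Measure.isProbabilityMeasure_map hQ.aemeasurable,
    fun F => ?_⟩
  rw [integral_map hQ.aemeasurable F.continuous.aestronglyMeasurable]
  simp only [integral_quotientLaw_s8, ← integral_uniformColoring_restrict]
  exact tendsto_integral_of_dominated_convergence (fun _ => ‖F‖)
    (fun n => (F.continuous.measurable.comp (hX n)).aestronglyMeasurable) (integrable_const _)
    (fun n => .of_forall fun ω => F.norm_coe_le_norm _)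
    (.of_forall fun ω => (F.continuous.tendsto _).comp (hlim ω))

end QuotientConvergence

section EdgeCover

variable {g : ℕ → ℕ → ℝ≥0∞}

lemma le_one_of_tsum_le_one (hg : ∑' p : ℕ × ℕ, g p.1 p.2 ≤ 1) (a b : ℕ) : g a b ≤ 1 :=
  (ENNReal.le_tsum (a, b)).trans hg

lemma tsum_tsum_le_one (hg : ∑' p : ℕ × ℕ, g p.1 p.2 ≤ 1) : ∑' a, ∑' b, g a b ≤ 1 :=
  ENNReal.tsum_prod'.symm.trans_le hg

lemma tsum_tsum_le_one' (hg : ∑' p : ℕ × ℕ, g p.1 p.2 ≤ 1) : ∑' b, ∑' a, g a b ≤ 1 :=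
  ENNReal.tsum_comm.symm.trans_le (tsum_tsum_le_one hg)

lemma tsum_col_le_one (hg : ∑' p : ℕ × ℕ, g p.1 p.2 ≤ 1) (b : ℕ) : ∑' a, g a b ≤ 1 :=
  (ENNReal.le_tsum b).trans (tsum_tsum_le_one' hg)

lemma tsum_diag_le_one (hg : ∑' p : ℕ × ℕ, g p.1 p.2 ≤ 1) : ∑' a, g a a ≤ 1 :=
  (ENNReal.tsum_comp_le_tsum_of_injective (f := fun a => (a, a))
    (fun _ _ h => congrArg Prod.fst h) (fun p => g p.1 p.2)).trans hg

lemma tsum_swap_le_one (hg : ∑' p : ℕ × ℕ, g p.1 p.2 ≤ 1) : ∑' p : ℕ × ℕ, g p.2 p.1 ≤ 1 := by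
  rw [ENNReal.tsum_prod']
  exact tsum_tsum_le_one' hg

def CoversVertex {V : Type*} (E : Finset (V × V)) (i : V) : Prop :=
  ∃ e ∈ E, e.1 = i ∨ e.2 = i

lemma not_coversVertex_iff {V : Type*} {E : Finset (V × V)} {i : V} :
    ¬CoversVertex E i ↔ ∀ e ∈ E, e.1 ≠ i ∧ e.2 ≠ i := by
  simp [CoversVertex]

lemma CoversVertex.erase {V : Type*} [DecidableEq V] {E : Finset (V × V)} {i : V}
    (h : CoversVertex E i) (e₀ : V × V) (h₁ : e₀.1 ≠ i) (h₂ : e₀.2 ≠ i) :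
    CoversVertex (E.erase e₀) i := by
  obtain ⟨e, he, hei⟩ := h
  refine ⟨e, mem_erase.2 ⟨?_, he⟩, hei⟩
  rintro rfl
  exact hei.elim h₁ h₂

variable {m : ℕ}

/-- The vertex weights `c` carry the row and column sums of `g` that are left behind when a
pendant vertex is summed out. -/
def edgeWeight (g : ℕ → ℕ → ℝ≥0∞) (E : Finset (Fin m × Fin m)) (c : Fin m → ℕ → ℝ≥0∞)
    (f : Fin m → ℕ) : ℝ≥0∞ :=
  (∏ e ∈ E, g (f e.1) (f e.2)) * ∏ i, c i (f i)

lemma edgeWeight_mul (E : Finset (Fin m × Fin m)) (c ψ : Fin m → ℕ → ℝ≥0∞) (f : Fin m → ℕ) :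
    edgeWeight g E (fun i a => c i a * ψ i a) f = edgeWeight g E c f * ∏ i, ψ i (f i) := by
  simp only [edgeWeight, prod_mul_distrib, mul_assoc]

lemma edgeWeight_eq_mul_erase {E : Finset (Fin m × Fin m)} {e₀ : Fin m × Fin m} (he₀ : e₀ ∈ E)
    (c : Fin m → ℕ → ℝ≥0∞) (f : Fin m → ℕ) :
    edgeWeight g E c f = g (f e₀.1) (f e₀.2) * edgeWeight g (E.erase e₀) c f := by
  rw [edgeWeight, edgeWeight, ← mul_prod_erase E _ he₀, mul_assoc]

lemma edgeWeight_le_erase (hg : ∑' p : ℕ × ℕ, g p.1 p.2 ≤ 1) {E : Finset (Fin m × Fin m)}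
    {e₀ : Fin m × Fin m} (he₀ : e₀ ∈ E) (c : Fin m → ℕ → ℝ≥0∞) (f : Fin m → ℕ) :
    edgeWeight g E c f ≤ edgeWeight g (E.erase e₀) c f := by
  rw [edgeWeight_eq_mul_erase he₀]
  exact mul_le_of_le_one_left' (le_one_of_tsum_le_one hg _ _)

def restrictEdges (z : Fin (m + 1)) (E : Finset (Fin (m + 1) × Fin (m + 1))) :
    Finset (Fin m × Fin m) :=
  E.preimage (Prod.map z.succAbove z.succAbove)
    (Fin.succAbove_right_injective.prodMap Fin.succAbove_right_injective).injOn

lemma CoversVertex.restrictEdges {z : Fin (m + 1)} {E : Finset (Fin (m + 1) × Fin (m + 1))}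
    (hz : ¬CoversVertex E z) {j : Fin m} (h : CoversVertex E (z.succAbove j)) :
    CoversVertex (restrictEdges z E) j := by
  obtain ⟨e, he, hej⟩ := h
  obtain ⟨a, ha⟩ := Fin.exists_succAbove_eq (not_coversVertex_iff.1 hz e he).1
  obtain ⟨b, hb⟩ := Fin.exists_succAbove_eq (not_coversVertex_iff.1 hz e he).2
  refine ⟨(a, b), by rwa [_root_.restrictEdges, mem_preimage, Prod.map_apply, ha, hb], ?_⟩
  rw [← ha, ← hb] at hej
  exact hej.imp (fun h => Fin.succAbove_right_injective h) fun h => Fin.succAbove_right_injective h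

lemma edgeWeight_insertNth {z : Fin (m + 1)} {E : Finset (Fin (m + 1) × Fin (m + 1))}
    (hz : ¬CoversVertex E z) (c : Fin (m + 1) → ℕ → ℝ≥0∞) (a : ℕ) (w : Fin m → ℕ) :
    edgeWeight g E c (z.insertNth a w) =
      c z a * edgeWeight g (restrictEdges z E) (fun j => c (z.succAbove j)) w := by
  set f : Fin (m + 1) → ℕ := z.insertNth a w with hf
  have hedges : ∏ e ∈ restrictEdges z E, g (w e.1) (w e.2) = ∏ e ∈ E, g (f e.1) (f e.2) := by
    rw [restrictEdges, ← prod_preimage (Prod.map z.succAbove z.succAbove) E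
      (Fin.succAbove_right_injective.prodMap Fin.succAbove_right_injective).injOn
      (fun e => g (f e.1) (f e.2))]
    · simp [hf]
    · intro e he hne
      obtain ⟨i, hi⟩ := Fin.exists_succAbove_eq (not_coversVertex_iff.1 hz e he).1
      obtain ⟨j, hj⟩ := Fin.exists_succAbove_eq (not_coversVertex_iff.1 hz e he).2
      exact (hne ⟨(i, j), by simp [hi, hj]⟩).elim
  rw [edgeWeight, edgeWeight, hedges, Fin.prod_univ_succAbove _ z]
  simp only [hf, Fin.insertNth_apply_same, Fin.insertNth_apply_succAbove]
  ring

lemma tsum_edgeWeight_removeNth {z : Fin (m + 1)} {E : Finset (Fin (m + 1) × Fin (m + 1))}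
    (hz : ¬CoversVertex E z) (c : Fin (m + 1) → ℕ → ℝ≥0∞) (Φ : ℕ → (Fin m → ℕ) → ℝ≥0∞) :
    ∑' f, Φ (f z) (z.removeNth f) * edgeWeight g E c f =
      ∑' w, (∑' a, c z a * Φ a w) *
        edgeWeight g (restrictEdges z E) (fun j => c (z.succAbove j)) w := by
  rw [← (Fin.insertNthEquiv (fun _ => ℕ) z).tsum_eq, ENNReal.tsum_prod', ENNReal.tsum_comm]
  refine tsum_congr fun w => ?_
  rw [← ENNReal.tsum_mul_right]
  refine tsum_congr fun a => ?_
  simp only [Fin.insertNthEquiv, Equiv.coe_fn_mk, Fin.insertNth_apply_same,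
    Fin.removeNth_insertNth, edgeWeight_insertNth hz]
  ring

variable (g) in
def EdgeWeightBound (m : ℕ) : Prop :=
  ∀ (E : Finset (Fin m × Fin m)) (c : Fin m → ℕ → ℝ≥0∞), (∀ i a, c i a ≤ 1) →
    (∀ i, CoversVertex E i ∨ ∑' a, c i a ≤ 1) → ∑' f, edgeWeight g E c f ≤ 1

lemma tsum_edgeWeight_le_one_of_isolated (ih : EdgeWeightBound g m) {z : Fin (m + 1)}
    {E : Finset (Fin (m + 1) × Fin (m + 1))} (hz : ¬CoversVertex E z)
    {c : Fin (m + 1) → ℕ → ℝ≥0∞} (hc : ∀ i a, c i a ≤ 1)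
    (hcov : ∀ i ≠ z, CoversVertex E i ∨ ∑' a, c i a ≤ 1)
    (κ : ℕ → ℝ≥0∞) (hκ : ∑' a, c z a * κ a ≤ 1) :
    ∑' f, κ (f z) * edgeWeight g E c f ≤ 1 := by
  rw [tsum_edgeWeight_removeNth hz c fun a _ => κ a]
  calc _ ≤ ∑' w, edgeWeight g (restrictEdges z E) (fun j => c (z.succAbove j)) w :=
        ENNReal.tsum_le_tsum fun w => mul_le_of_le_one_left' hκ
    _ ≤ 1 := ih _ _ (fun j => hc _) fun j =>
        (hcov _ (Fin.succAbove_ne z j)).imp_left (·.restrictEdges hz)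

/-- Summing out the pendant vertex `z` turns its edge factor into the column sum of `κ` at the
neighbour, which becomes part of the neighbour's vertex weight. -/
lemma tsum_edgeWeight_le_one_of_pendant (ih : EdgeWeightBound g m) {z : Fin (m + 1)} (v : Fin m)
    {E : Finset (Fin (m + 1) × Fin (m + 1))} (hz : ¬CoversVertex E z)
    {c : Fin (m + 1) → ℕ → ℝ≥0∞} (hc : ∀ i a, c i a ≤ 1)
    (hcov : ∀ i ≠ z, i ≠ z.succAbove v → CoversVertex E i ∨ ∑' a, c i a ≤ 1)
    (κ : ℕ → ℕ → ℝ≥0∞) (hκ : ∑' p : ℕ × ℕ, κ p.1 p.2 ≤ 1) :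
    ∑' f, κ (f z) (f (z.succAbove v)) * edgeWeight g E c f ≤ 1 := by
  classical
  let ψ : Fin m → ℕ → ℝ≥0∞ := fun j b => if j = v then ∑' a, κ a b else 1
  have hψ : ∀ j b, ψ j b ≤ 1 := fun j b => by
    by_cases hj : j = v <;> simp [ψ, hj, tsum_col_le_one hκ]
  refine (tsum_edgeWeight_removeNth hz c fun a w => κ a (w v)).trans_le ?_
  calc _ ≤ ∑' w, edgeWeight g (restrictEdges z E) (fun j b => c (z.succAbove j) b * ψ j b) w := by
        refine ENNReal.tsum_le_tsum fun w => ?_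
        rw [edgeWeight_mul, mul_comm, Fintype.prod_ite_eq']
        exact mul_le_mul_right (ENNReal.tsum_le_tsum fun a => mul_le_of_le_one_left' (hc z a)) _
    _ ≤ 1 := by
        refine ih _ _ (fun j b => mul_le_one' (hc _ b) (hψ j b)) fun j => ?_
        by_cases hj : j = v
        · subst hj
          refine Or.inr ((ENNReal.tsum_le_tsum fun b => mul_le_of_le_one_left' (hc _ b)).trans ?_)
          simpa [ψ] using tsum_tsum_le_one' hκ
        · refine (hcov _ (Fin.succAbove_ne z j)
            (Fin.succAbove_right_injective.ne hj)).imp (·.restrictEdges hz) fun h => ?_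
          simpa [ψ, hj] using h

lemma tsum_edgeWeight_le_one_of_private (hg : ∑' p : ℕ × ℕ, g p.1 p.2 ≤ 1)
    (ih : EdgeWeightBound g m) {E : Finset (Fin (m + 1) × Fin (m + 1))}
    {e₀ : Fin (m + 1) × Fin (m + 1)} (he₀ : e₀ ∈ E) {z : Fin (m + 1)}
    (hzE : CoversVertex E z) (hz : ¬CoversVertex (E.erase e₀) z)
    {c : Fin (m + 1) → ℕ → ℝ≥0∞} (hc : ∀ i a, c i a ≤ 1)
    (hcov : ∀ i, CoversVertex E i ∨ ∑' a, c i a ≤ 1) :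
    ∑' f, edgeWeight g E c f ≤ 1 := by
  have hz₀ : e₀.1 = z ∨ e₀.2 = z := by
    obtain ⟨e, he, hez⟩ := hzE
    by_cases h : e = e₀
    · exact h ▸ hez
    · exact (hz ⟨e, mem_erase.2 ⟨h, he⟩, hez⟩).elim
  have hcov' : ∀ i, e₀.1 ≠ i → e₀.2 ≠ i → CoversVertex (E.erase e₀) i ∨ ∑' a, c i a ≤ 1 :=
    fun i h₁ h₂ => (hcov i).imp_left (·.erase e₀ h₁ h₂)
  simp_rw [edgeWeight_eq_mul_erase he₀]
  obtain ⟨a, b⟩ := e₀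
  dsimp only at hz₀ hcov' ⊢
  by_cases ha : a = z <;> by_cases hb : b = z
  · subst ha hb
    refine tsum_edgeWeight_le_one_of_isolated ih hz hc
      (fun i hi => hcov' i (Ne.symm hi) (Ne.symm hi)) (fun x => g x x) ?_
    exact (ENNReal.tsum_le_tsum fun x => mul_le_of_le_one_left' (hc b x)).trans
      (tsum_diag_le_one hg)
  · subst ha
    obtain ⟨v, rfl⟩ := Fin.exists_succAbove_eq hb
    exact tsum_edgeWeight_le_one_of_pendant ih v hz hc
      (fun i hi hv => hcov' i (Ne.symm hi) (Ne.symm hv)) g hg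
  · subst hb
    obtain ⟨v, rfl⟩ := Fin.exists_succAbove_eq ha
    exact tsum_edgeWeight_le_one_of_pendant ih v hz hc
      (fun i hi hv => hcov' i (Ne.symm hv) (Ne.symm hi)) (fun x y => g y x) (tsum_swap_le_one hg)
  · exact (hz₀.elim ha hb).elim

theorem edgeWeightBound (hg : ∑' p : ℕ × ℕ, g p.1 p.2 ≤ 1) (m : ℕ) : EdgeWeightBound g m := by
  induction m with
  | zero => intro E c _ _; simp [edgeWeight, eq_empty_of_isEmpty E]
  | succ m ih =>
    intro E
    induction E using Finset.strongInduction with | H E ihE => ?_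
    intro c hc hcov
    by_cases hred : ∃ e₀ ∈ E, ∀ i, CoversVertex (E.erase e₀) i ∨ ∑' a, c i a ≤ 1
    · obtain ⟨e₀, he₀, hcov'⟩ := hred
      exact (ENNReal.tsum_le_tsum (edgeWeight_le_erase hg he₀ c)).trans
        (ihE _ (erase_ssubset he₀) c hc hcov')
    by_cases hunc : ∃ z, ¬CoversVertex E z
    · obtain ⟨z, hz⟩ := hunc
      simpa using tsum_edgeWeight_le_one_of_isolated ih hz hc (fun i _ => hcov i) 1
        (by simpa using (hcov z).resolve_left hz)
    -- no edge is redundant, so dropping any edge `e₀` uncovers a vertex, which lies on `e₀` only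
    push Not at hred hunc
    obtain ⟨e₀, he₀, -⟩ := hunc 0
    obtain ⟨z, hz, -⟩ := hred e₀ he₀
    exact tsum_edgeWeight_le_one_of_private hg ih he₀ (hunc z) hz hc hcov

end EdgeCover

section Homomorphisms

variable {k : ℕ}

lemma homNum_div_const {N : ℕ} (H : Fin k → Fin k → ℕ) (G : Fin N → Fin N → ℝ) (s : ℝ) :
    homNum H (fun i j => G i j / s) = homNum H G / s ^ ∑ i, ∑ j, H i j := by
  simp only [homNum, sum_div, div_pow, prod_div_distrib, prod_pow_eq_pow_sum]

lemma homNum_restrict_eq_sum_piFinset (H : Fin k → Fin k → ℕ) (G : ℕ → ℕ → ℝ) (N : ℕ) :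
    homNum H (fun i j : Fin N => G i j) =
      ∑ f ∈ Fintype.piFinset fun _ : Fin k => range N, ∏ i, ∏ j, G (f i) (f j) ^ H i j :=
  sum_bij' (fun f _ i => f i) (fun f hf i => ⟨f i, mem_range.1 (Fintype.mem_piFinset.1 hf i)⟩)
    (fun f _ => Fintype.mem_piFinset.2 fun i => mem_range.2 (f i).2) (fun _ _ => mem_univ _)
    (fun _ _ => rfl) (fun _ _ => rfl) fun _ _ => rfl

def edgeSupport (H : Fin k → Fin k → ℕ) : Finset (Fin k × Fin k) :=
  {e | 0 < H e.1 e.2}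

lemma IsMultigraph.coversVertex_edgeSupport {H : Fin k → Fin k → ℕ} (hH : IsMultigraph H)
    (i : Fin k) : CoversVertex (edgeSupport H) i := by
  obtain ⟨j, hj | hj⟩ := hH i
  exacts [⟨(i, j), by simpa [edgeSupport] using hj, Or.inl rfl⟩,
    ⟨(j, i), by simpa [edgeSupport] using hj, Or.inr rfl⟩]

lemma prod_prod_pow_le_prod_edgeSupport {g : ℕ → ℕ → ℝ≥0∞} (hg : ∀ a b, g a b ≤ 1)
    (H : Fin k → Fin k → ℕ) (f : Fin k → ℕ) :
    ∏ i, ∏ j, g (f i) (f j) ^ H i j ≤ ∏ e ∈ edgeSupport H, g (f e.1) (f e.2) := by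
  rw [edgeSupport, prod_filter, ← Fintype.prod_prod_type']
  refine prod_le_prod' fun e _ => ?_
  split_ifs with he
  · simpa using pow_le_pow_right_of_le_one' (hg _ _) he
  · simp [Nat.eq_zero_of_not_pos he]

lemma summable_prod_prod_pow {G : ℕ → ℕ → ℝ} (hpos : ∀ i j, 0 ≤ G i j)
    (hsum : HasSum (fun p : ℕ × ℕ => G p.1 p.2) 1) {H : Fin k → Fin k → ℕ}
    (hH : IsMultigraph H) :
    Summable fun f : Fin k → ℕ => ∏ i, ∏ j, G (f i) (f j) ^ H i j := by
  have hnonneg : ∀ f : Fin k → ℕ, 0 ≤ ∏ i, ∏ j, G (f i) (f j) ^ H i j := fun f =>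
    prod_nonneg fun i _ => prod_nonneg fun j _ => pow_nonneg (hpos _ _) _
  let g : ℕ → ℕ → ℝ≥0∞ := fun a b => ENNReal.ofReal (G a b)
  have hg : ∑' p : ℕ × ℕ, g p.1 p.2 ≤ 1 := by
    rw [← ENNReal.ofReal_tsum_of_nonneg (fun p : ℕ × ℕ => hpos p.1 p.2) hsum.summable,
      hsum.tsum_eq, ENNReal.ofReal_one]
  have hbound : ∑' f : Fin k → ℕ, ENNReal.ofReal (∏ i, ∏ j, G (f i) (f j) ^ H i j) ≤ 1 := by
    refine le_trans (ENNReal.tsum_le_tsum fun f => ?_) (edgeWeightBound hg k (edgeSupport H)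
      (fun _ _ => 1) (fun _ _ => le_rfl) fun i => .inl (hH.coversVertex_edgeSupport i))
    rw [edgeWeight, prod_const_one, mul_one,
      ENNReal.ofReal_prod_of_nonneg fun i _ => prod_nonneg fun j _ => pow_nonneg (hpos _ _) _]
    simp_rw [ENNReal.ofReal_prod_of_nonneg fun j _ => pow_nonneg (hpos _ _) _,
      ENNReal.ofReal_pow (hpos _ _)]
    exact prod_prod_pow_le_prod_edgeSupport (le_one_of_tsum_le_one hg) H f
  exact (ENNReal.summable_toReal (ne_top_of_le_ne_top ENNReal.one_ne_top hbound)).congr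
    fun f => ENNReal.toReal_ofReal (hnonneg f)

lemma tendsto_homNum_normTrunc {G : ℕ → ℕ → ℝ} (hpos : ∀ i j, 0 ≤ G i j)
    (hsum : HasSum (fun p : ℕ × ℕ => G p.1 p.2) 1) {H : Fin k → Fin k → ℕ}
    (hH : IsMultigraph H) :
    Tendsto (fun n => homNum H (normTrunc G n)) atTop
      (𝓝 (∑' f : Fin k → ℕ, ∏ i, ∏ j, G (f i) (f j) ^ H i j)) := by
  have hnum := (summable_prod_prod_pow hpos hsum hH).hasSum.tendsto_sum_piFinset_range
  have hden := hsum.tendsto_sum_range_sum_range.pow (∑ i, ∑ j, H i j)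
  rw [one_pow] at hden
  rw [← div_one (∑' f, _)]
  refine (hnum.div hden one_ne_zero).congr fun n => ?_
  rw [Pi.div_apply, ← homNum_restrict_eq_sum_piFinset, ← homNum_div_const]
  rfl

end Homomorphisms

theorem stmt8_general (G : ℕ → ℕ → ℝ) (hpos : ∀ i j, 0 ≤ G i j)
    (hsum : HasSum (fun p : ℕ × ℕ => G p.1 p.2) 1) :
    QuotientConverges (fun n => fun i j : Fin (n + 1) =>
      G i j / ∑ a ∈ Finset.range (n + 1), ∑ b ∈ Finset.range (n + 1), G a b) ∧
    ∀ (k : ℕ) (H : Fin k → Fin k → ℕ), IsMultigraph H →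
      ∃ L : ℝ, HasSum (fun f : Fin k → ℕ => ∏ i, ∏ j, G (f i) (f j) ^ H i j) L ∧
        Tendsto (fun n => homNum H (fun i j : Fin (n + 1) =>
            G i j / ∑ a ∈ Finset.range (n + 1), ∑ b ∈ Finset.range (n + 1), G a b))
          atTop (𝓝 L) :=
  ⟨quotientConverges_normTrunc hpos hsum, fun _ _ hH =>
    ⟨_, (summable_prod_prod_pow hpos hsum hH).hasSum, tendsto_homNum_normTrunc hpos hsum hH⟩⟩

/-- normalized truncations of an infinite summable array quotient-converge,
and for each multigraph `H` the infinite homomorphism series converges to the limit of the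
homomorphism numbers of the truncations. -/
theorem stmt8 (G : ℕ → ℕ → ℝ) (hpos : ∀ i j, 0 ≤ G i j)
    (hsum : HasSum (fun p : ℕ × ℕ => G p.1 p.2) 1)
    (hs : ∀ n : ℕ, 0 < ∑ a ∈ Finset.range (n + 1), ∑ b ∈ Finset.range (n + 1), G a b) :
    QuotientConverges (fun n => fun i j : Fin (n + 1) =>
      G i j / ∑ a ∈ Finset.range (n + 1), ∑ b ∈ Finset.range (n + 1), G a b) ∧
    ∀ (k : ℕ) (H : Fin k → Fin k → ℕ), IsMultigraph H →
      ∃ L : ℝ, HasSum (fun f : Fin k → ℕ => ∏ i, ∏ j, G (f i) (f j) ^ H i j) L ∧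
        Tendsto (fun n => homNum H (fun i j : Fin (n + 1) =>
            G i j / ∑ a ∈ Finset.range (n + 1), ∑ b ∈ Finset.range (n + 1), G a b))
          atTop (𝓝 L) :=
  stmt8_general G hpos hsum
end
end
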